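/- arXiv:math/0111192 — 2 statements merged into one kernel-verified Lean document; each statement's English description precedes it below -/
import Mathlib

section
/- For every integer k ≥ 1, the k-split polynomials {G_λ^{(k)}}, indexed by the k-bounded partitions λ, form a basis of the vector space Λ^{(k)}. -/
open scoped BigOperators Classical

noncomputable section

/-- Model of the ring of symmetric functions `Λ = ℚ[h₁,h₂,…]`: the polynomial
ring on the (algebraically independent) complete homogeneous generators. -/
abbrev SymFn : Type := MvPolynomial ℕ ℚ

/-- The complete homogeneous symmetric function `h_r` (`h_0 = 1`). -/
def hh : ℕ → SymFn
  | 0 => 1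
  | r + 1 => MvPolynomial.X r

/-- `h_n` for an integer index, with `h_n = 0` for `n < 0`. -/
def hZ (n : ℤ) : SymFn := if n < 0 then 0 else hh n.toNat

/-- `h_λ = h_{λ₁} h_{λ₂} ⋯`. -/
def hProd (l : List ℕ) : SymFn := (l.map hh).prod

/-- The Schur function via the Jacobi–Trudi determinant
`s_λ = det(h_{λ_i - i + j})_{1 ≤ i,j ≤ ℓ(λ)}`. -/
def schur (l : List ℕ) : SymFn :=
  Matrix.det (Matrix.of fun i j : Fin l.length =>
    hZ (((l.get i : ℕ) : ℤ) - ((i : ℕ) : ℤ) + ((j : ℕ) : ℤ)))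

/-- A partition: a weakly decreasing list of positive integers. -/
def IsPartition (l : List ℕ) : Prop := l.Pairwise (· ≥ ·) ∧ ∀ x ∈ l, 0 < x

/-- A `k`-bounded partition: all parts at most `k`. -/
def KBounded (k : ℕ) (l : List ℕ) : Prop := ∀ x ∈ l, x ≤ k

/-- The main hook-length `h_M(λ) = λ₁ + ℓ(λ) - 1`. -/
def mainHook (l : List ℕ) : ℕ := l.headI + l.length - 1

/-- Dominance order: `Dominates μ λ` means `μ ≥ λ`, i.e.
`λ₁ + ⋯ + λ_i ≤ μ₁ + ⋯ + μ_i` for all `i`. -/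
def Dominates (mu lam : List ℕ) : Prop := ∀ i : ℕ, (lam.take i).sum ≤ (mu.take i).sum

/-- Auxiliary function (with fuel) computing the `k`-split of a partition:
successive blocks of main hook-length exactly `k` (the last block having
main hook-length at most `k`). -/
def kSplitAux (k : ℕ) : ℕ → List ℕ → List (List ℕ)
  | _, [] => []
  | 0, l => [l]
  | fuel + 1, a :: rest =>
    if (a :: rest).length ≤ k + 1 - a ∨ k + 1 - a = 0 then [a :: rest]
    else (a :: rest).take (k + 1 - a) :: kSplitAux k fuel ((a :: rest).drop (k + 1 - a))

/-- The `k`-split `λ^{→k}` of a `k`-bounded partition `λ`. -/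
def kSplit (k : ℕ) (l : List ℕ) : List (List ℕ) := kSplitAux k l.length l

/-- The `k`-split polynomial `G_λ^{(k)} = s_{λ^{(1)}} s_{λ^{(2)}} ⋯ s_{λ^{(r)}}`. -/
def Gk (k : ℕ) (l : List ℕ) : SymFn := ((kSplit k l).map schur).prod

/-- `Λ^{(k)}`: the linear span of the `h_λ` over `k`-bounded partitions `λ`. -/
def LamK (k : ℕ) : Submodule ℚ SymFn :=
  Submodule.span ℚ {f : SymFn | ∃ l : List ℕ, IsPartition l ∧ KBounded k l ∧ f = hProd l}

/-!
In `SymFn = ℚ[h₁, h₂, …]` every `h_λ` is a monomial, and the partitions `λ` correspond to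
exponents. Expanding the Jacobi–Trudi determinant, `s_μ = h_μ + ∑ c_ν h_ν` where every `ν`
strictly dominates `μ`: the term of a permutation `σ ≠ 1` is `∏ h_{μᵢ - i + σ i}`, and
shifting the indices of `μ` upwards by `σ` can only move weight towards larger parts.
Dominance is compatible with concatenating partitions and the blocks of the `k`-split of `λ`
concatenate to `λ`, so `G_λ = h_λ + (terms h_ν with ν ▷ λ)`. This unitriangularity gives linear
independence. Each block has main hook-length at most `k`, so `G_λ` only involves `h₁, …, h_k`;
as only finitely many partitions of a given size dominate `λ`, induction down the dominance
order expresses every `h_λ`, `λ` `k`-bounded, through the `G_μ`.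
-/

namespace KSplit

open MvPolynomial Finset
open scoped Pointwise

def hExp : ℕ → ℕ →₀ ℕ
  | 0 => 0
  | j + 1 => Finsupp.single j 1

lemma hh_eq_monomial (a : ℕ) : hh a = monomial (hExp a) 1 := by
  cases a <;> rfl

/-- Since `hh (j + 1) = X j`, `h_λ = X ^ expOf λ` and `expOf λ j` counts the parts of `λ` equal
to `j + 1`. -/
def expOf (l : List ℕ) : ℕ →₀ ℕ := (l.map hExp).sum

lemma expOf_append (l l' : List ℕ) : expOf (l ++ l') = expOf l + expOf l' := by
  simp [expOf]

lemma hProd_eq_monomial (l : List ℕ) : hProd l = monomial (expOf l) 1 := by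
  induction l with
  | nil => rfl
  | cons a l ih =>
    rw [hProd, List.map_cons, List.prod_cons, ← hProd, ih, hh_eq_monomial, monomial_mul, one_mul]
    simp [expOf]

lemma expOf_eq_sum_get (l : List ℕ) : expOf l = ∑ i : Fin l.length, hExp (l.get i) := by
  rw [expOf, ← List.sum_ofFn]
  simp

lemma toMultiset_expOf {l : List ℕ} (hl : ∀ x ∈ l, 0 < x) :
    Finsupp.toMultiset (expOf l) = (l.map (· - 1) : List ℕ) := by
  induction l with
  | nil => rfl
  | cons a l ih =>
    obtain ⟨j, rfl⟩ : ∃ j, a = j + 1 := Nat.exists_eq_add_one.2 (hl a List.mem_cons_self)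
    have := ih fun x hx => hl x (List.mem_cons_of_mem _ hx)
    simp_all [expOf, hExp, Finsupp.toMultiset_single]

def partOf (d : ℕ →₀ ℕ) : List ℕ := (Finsupp.toMultiset d |>.map (· + 1)).sort (· ≥ ·)

lemma isPartition_partOf (d : ℕ →₀ ℕ) : IsPartition (partOf d) := by
  refine ⟨Multiset.pairwise_sort _ _, fun x hx => ?_⟩
  obtain ⟨j, -, rfl⟩ := Multiset.mem_map.1 ((Multiset.mem_sort _).1 hx)
  exact j.succ_pos

lemma kBounded_partOf {k : ℕ} {d : ℕ →₀ ℕ} (hd : ↑d.support ⊆ Set.Iio k) :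
    KBounded k (partOf d) := by
  intro x hx
  obtain ⟨j, hj, rfl⟩ := Multiset.mem_map.1 ((Multiset.mem_sort _).1 hx)
  exact hd (Finsupp.mem_toMultiset d j |>.1 hj)

lemma expOf_partOf (d : ℕ →₀ ℕ) : expOf (partOf d) = d := by
  apply Finsupp.orderIsoMultiset.injective
  simp only [Finsupp.coe_orderIsoMultiset]
  rw [toMultiset_expOf (isPartition_partOf d).2, ← Multiset.map_coe, partOf, Multiset.sort_eq,
    Multiset.map_map]
  simp

lemma partOf_expOf {l : List ℕ} (hl : IsPartition l) : partOf (expOf l) = l := by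
  refine List.Perm.eq_of_pairwise' (isPartition_partOf _).1 hl.1 (Multiset.coe_eq_coe.1 ?_)
  rw [partOf, Multiset.sort_eq, toMultiset_expOf hl.2, Multiset.map_coe, List.map_map]
  congr 1
  exact List.map_congr_left (fun x hx => Nat.sub_add_cancel (hl.2 x hx)) |>.trans (List.map_id l)

lemma expOf_injOn : Set.InjOn expOf {l | IsPartition l} := fun l hl l' hl' h => by
  rw [← partOf_expOf hl, ← partOf_expOf hl', h]

/-- `hinge d v = ∑ᵢ (λᵢ - v)` over the parts of the partition `λ` with exponent `d`. For partitions
of the same size `hinge d 0 = hinge e 0`, `hinge d ≤ hinge e` says that `e` dominates `d`. -/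
def hinge : (ℕ →₀ ℕ) →+ (ℕ → ℕ) := Finsupp.weight fun j v => j + 1 - v

lemma hinge_apply (d : ℕ →₀ ℕ) (v : ℕ) : hinge d v = d.sum fun j c => c * (j + 1 - v) := by
  rw [hinge, Finsupp.weight_apply, Finsupp.sum, Finset.sum_apply]
  rfl

lemma hinge_hExp (a v : ℕ) : hinge (hExp a) v = a - v := by
  cases a <;> simp [hExp, hinge_apply]

lemma hinge_sum_hExp {n : ℕ} (x : Fin n → ℕ) (v : ℕ) :
    hinge (∑ i, hExp (x i)) v = ∑ i, (x i - v) := by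
  simp [map_sum, hinge_hExp]

lemma finite_hinge_zero_eq (w : ℕ) : {e : ℕ →₀ ℕ | hinge e 0 = w}.Finite := by
  refine (range w |>.finsupp fun _ => range (w + 1)).finite_toSet.subset fun e he => ?_
  have hw : hinge e 0 = Finsupp.weight (fun j => j + 1) e := by
    simp [hinge_apply, Finsupp.weight_apply]
  rw [Set.mem_ofPred_eq, hw] at he
  rw [mem_coe, mem_finsupp_iff]
  refine ⟨fun j hj => ?_, fun j _ =>
    mem_range_succ_iff.2 (he ▸ Finsupp.le_weight _ j.succ_ne_zero e)⟩
  rw [mem_range, Nat.lt_iff_add_one_le]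
  exact he ▸ Finsupp.le_weight_of_ne_zero' _ (Finsupp.mem_support_iff.1 hj)

def dominators (d : ℕ →₀ ℕ) : Set (ℕ →₀ ℕ) := {e | hinge d < hinge e ∧ hinge e 0 = hinge d 0}

lemma add_subset_dominators (d d' : ℕ →₀ ℕ) :
    dominators d + insert d' (dominators d') ⊆ dominators (d + d') := by
  rw [Set.add_subset_iff]
  rintro e ⟨hlt, hsize⟩ e' he'
  have hle' : hinge d' ≤ hinge e' ∧ hinge e' 0 = hinge d' 0 := by
    rcases he' with rfl | he'
    · exact ⟨le_rfl, rfl⟩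
    · exact ⟨he'.1.le, he'.2⟩
  refine ⟨?_, ?_⟩
  · rw [map_add, map_add]
    exact add_lt_add_of_lt_of_le hlt hle'.1
  · simp [hsize, hle'.2]

lemma wellFounded_dominators : WellFounded fun e d : ℕ →₀ ℕ => e ∈ dominators d := by
  refine Subrelation.wf (fun {e d} h => ?_) (measure fun d => (dominators d).ncard).wf
  refine Set.ncard_lt_ncard ?_ ((finite_hinge_zero_eq (hinge d 0)).subset fun f hf => hf.2)
  have hsub : dominators e ⊆ dominators d := fun f hf => ⟨h.1.trans hf.1, hf.2.trans h.2⟩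
  exact (Set.ssubset_iff_of_subset hsub).2 ⟨e, h, fun he => he.1.ne rfl⟩

def HasLeadingTerm (d : ℕ →₀ ℕ) (f : SymFn) : Prop :=
  f - monomial d 1 ∈ restrictSupport ℚ (dominators d)

lemma HasLeadingTerm.mem_restrictSupport {d : ℕ →₀ ℕ} {f : SymFn} (h : HasLeadingTerm d f) :
    f ∈ restrictSupport ℚ (insert d (dominators d)) := by
  rw [← sub_add_cancel f (monomial d 1)]
  exact add_mem (restrictSupport_mono ℚ (Set.subset_insert _ _) h)
    ((monomial_mem_restrictSupport ℚ).2 (.inl (Set.mem_insert _ _)))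

lemma HasLeadingTerm.mul {d d' : ℕ →₀ ℕ} {f g : SymFn} (hf : HasLeadingTerm d f)
    (hg : HasLeadingTerm d' g) : HasLeadingTerm (d + d') (f * g) := by
  have key : f * g - monomial (d + d') 1 =
      (f - monomial d 1) * g + (g - monomial d' 1) * monomial d 1 := by
    rw [show monomial (d + d') (1 : ℚ) = monomial d 1 * monomial d' 1 by rw [monomial_mul, one_mul]]
    ring
  have hXd : monomial d 1 ∈ restrictSupport ℚ (insert d (dominators d)) :=
    (monomial_mem_restrictSupport ℚ).2 (.inl (Set.mem_insert _ _))
  rw [HasLeadingTerm, key]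
  exact add_mem
    (restrictSupport_mono ℚ (add_subset_dominators d d')
      ((restrictSupport_add ℚ _ _).ge (Submodule.mul_mem_mul hf hg.mem_restrictSupport)))
    (restrictSupport_mono ℚ (add_comm d' d ▸ add_subset_dominators d' d)
      ((restrictSupport_add ℚ _ _).ge (Submodule.mul_mem_mul hg hXd)))

lemma HasLeadingTerm.coeff_eq {d e : ℕ →₀ ℕ} {f : SymFn} (h : HasLeadingTerm d f)
    (he : ¬ hinge d < hinge e) : coeff e f = if d = e then 1 else 0 := by
  have : coeff e (f - monomial d 1) = 0 :=
    notMem_support_iff.1 fun hmem => he (h hmem).1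
  rwa [coeff_sub, coeff_monomial, sub_eq_zero] at this

theorem linearIndependent_of_hasLeadingTerm {ι : Type*} {f : ι → SymFn} {d : ι → ℕ →₀ ℕ}
    (hd : Function.Injective d) (hf : ∀ i, HasLeadingTerm (d i) (f i)) :
    LinearIndependent ℚ f := by
  rw [linearIndependent_iff]
  intro c hc
  by_contra hc₀
  obtain ⟨i₀, hi₀, hmin⟩ :=
    c.support.exists_minimalFor (hinge ∘ d) (Finsupp.support_nonempty_iff.2 hc₀)
  have hcoeff := congr_arg (coeff (d i₀)) hc
  have hother : ∀ i ∈ c.support, i ≠ i₀ → coeff (d i₀) (f i) = 0 := fun i hi hne => by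
    rw [(hf i).coeff_eq fun hlt => (hlt.not_ge (hmin hi hlt.le)), if_neg (hd.ne hne)]
  rw [Finsupp.linearCombination_apply, Finsupp.sum, coeff_sum, sum_eq_single i₀
    (fun i hi hne => by rw [coeff_smul, hother i hi hne, smul_zero])
    (fun h => absurd hi₀ h), coeff_smul, (hf i₀).coeff_eq (lt_irrefl _), if_pos rfl,
    smul_eq_mul, mul_one, coeff_zero] at hcoeff
  exact Finsupp.mem_support_iff.1 hi₀ hcoeff

lemma sum_range_card_le_sum (s : Finset ℕ) : ∑ i ∈ range #s, i ≤ ∑ i ∈ s, i := by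
  refine s.induction_on_max (by simp) fun a s ha ih => ?_
  have hcard : #s ≤ a := by simpa using card_le_card fun x hx => mem_range.2 (ha x hx)
  rw [card_insert_of_notMem fun h => lt_irrefl a (ha a h), sum_range_succ,
    sum_insert fun h => lt_irrefl a (ha a h)]
  omega

lemma sum_val_le_sum_of_isLowerSet {n : ℕ} {J : Finset (Fin n)} (hJ : IsLowerSet (J : Set (Fin n)))
    {f : Fin n → ℕ} (hf : Function.Injective f) : ∑ i ∈ J, (i : ℕ) ≤ ∑ i ∈ J, f i := by
  have hval : J.image Fin.val ⊆ range #J := fun m hm => by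
    obtain ⟨i, hi, rfl⟩ := mem_image.1 hm
    have : Finset.Iic i ⊆ J := fun j hj => hJ (Finset.mem_Iic.1 hj) hi
    have hc := card_le_card this
    rw [Fin.card_Iic] at hc
    exact mem_range.2 hc
  calc ∑ i ∈ J, (i : ℕ) = ∑ m ∈ J.image Fin.val, m :=
        (sum_image (f := fun m => m) fun _ _ _ _ => Fin.ext).symm
    _ ≤ ∑ m ∈ range #J, m := sum_le_sum_of_subset hval
    _ ≤ ∑ m ∈ J.image f, m := card_image_of_injective J hf ▸ sum_range_card_le_sum _
    _ = ∑ i ∈ J, f i := sum_image fun _ _ _ _ h => hf h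

section JacobiTrudiTerms

variable {n : ℕ} {p t : Fin n → ℕ} {τ : Equiv.Perm (Fin n)}

lemma sum_tsub_le_sum_tsub_of_perm (hp : Antitone p) (ht : ∀ i, (t i : ℤ) = p i - i + τ i)
    (v : ℕ) : ∑ i, (p i - v) ≤ ∑ i, (t i - v) := by
  -- the parts of `p` above `v` sit at an initial segment `J`, whose indices `τ` can only raise
  set J := univ.filter fun i => v < p i
  have hJ : IsLowerSet (J : Set (Fin n)) := fun i j hij hi => by
    simp only [J, coe_filter, mem_univ, true_and, Set.mem_ofPred_eq] at hi ⊢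
    exact hi.trans_le (hp hij)
  have hshift : ∑ i ∈ J, (i : ℕ) ≤ ∑ i ∈ J, (τ i : ℕ) :=
    sum_val_le_sum_of_isLowerSet hJ (Fin.val_injective.comp τ.injective)
  have hpt : ∀ i ∈ J, (p i - v) + τ i ≤ (t i - v) + i := fun i hi => by
    have := ht i
    have := (mem_filter.1 hi).2
    omega
  have hsum := sum_le_sum hpt
  rw [sum_add_distrib, sum_add_distrib] at hsum
  calc ∑ i, (p i - v) = ∑ i ∈ J, (p i - v) := (sum_filter_of_ne fun i _ h => by omega).symm
    _ ≤ ∑ i ∈ J, (t i - v) := by omega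
    _ ≤ ∑ i, (t i - v) := sum_le_sum_of_subset (subset_univ J)

lemma exists_sum_tsub_lt_sum_tsub_of_perm (hp : Antitone p)
    (ht : ∀ i, (t i : ℤ) = p i - i + τ i) (hτ : τ ≠ 1) :
    ∃ v, ∑ i, (p i - v) < ∑ i, (t i - v) := by
  obtain ⟨j, hj, hjmin⟩ : ∃ j, τ j ≠ j ∧ ∀ i < j, τ i = i := by
    have hne : (univ.filter fun i => τ i ≠ i).Nonempty := by
      contrapose! hτ
      exact Equiv.ext fun i => by simpa using filter_eq_empty_iff.1 hτ (mem_univ i)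
    obtain ⟨j, hj, hjmin⟩ := Finset.exists_minimal hne
    refine ⟨j, (mem_filter.1 hj).2, fun i hij => ?_⟩
    by_contra hi
    exact (hjmin (mem_filter.2 ⟨mem_univ i, hi⟩) hij.le).not_gt hij
  have hlt : (j : ℕ) < τ j :=
    (lt_or_gt_of_ne hj).resolve_left fun h => hj (τ.injective (hjmin _ h))
  -- at `v = p j` the parts above `v` sit before `j`, where `t = p`, and `t j > v` is new
  refine ⟨p j, ?_⟩
  set J := univ.filter fun i => p j < p i
  have hJj : ∀ i ∈ J, i < j := fun i hi =>
    lt_of_not_ge fun h => (mem_filter.1 hi).2.not_ge (hp h)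
  calc ∑ i, (p i - p j) = ∑ i ∈ J, (p i - p j) := (sum_filter_of_ne fun i _ h => by omega).symm
    _ = ∑ i ∈ J, (t i - p j) := sum_congr rfl fun i hi => by
        have := ht i
        rw [hjmin i (hJj i hi)] at this
        omega
    _ < ∑ i ∈ insert j J, (t i - p j) := by
        rw [sum_insert fun h => lt_irrefl j (hJj j h)]
        have := ht j
        omega
    _ ≤ ∑ i, (t i - p j) := sum_le_sum_of_subset (subset_univ _)

lemma sum_eq_sum_of_perm (ht : ∀ i, (t i : ℤ) = p i - i + τ i) : ∑ i, t i = ∑ i, p i := by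
  have hτ : ∑ i, ((τ i : ℕ) : ℤ) = ∑ i : Fin n, ((i : ℕ) : ℤ) :=
    Equiv.sum_comp τ fun i => ((i : ℕ) : ℤ)
  have : ∑ i, (t i : ℤ) = ∑ i, (p i : ℤ) := by
    simp only [ht, sum_add_distrib, sum_sub_distrib, hτ, sub_add_cancel]
  exact_mod_cast this

lemma mem_dominators_of_perm (hp : Antitone p) (ht : ∀ i, (t i : ℤ) = p i - i + τ i)
    (hτ : τ ≠ 1) : ∑ i, hExp (t i) ∈ dominators (∑ i, hExp (p i)) := by
  simp only [dominators, Set.mem_ofPred_eq, Pi.lt_def, Pi.le_def, hinge_sum_hExp]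
  exact ⟨⟨sum_tsub_le_sum_tsub_of_perm hp ht, exists_sum_tsub_lt_sum_tsub_of_perm hp ht hτ⟩,
    by simpa using sum_eq_sum_of_perm ht⟩

end JacobiTrudiTerms

lemma prod_hZ_eq_monomial {n : ℕ} {a : Fin n → ℤ} (ha : ∀ i, 0 ≤ a i) :
    ∏ i, hZ (a i) = monomial (∑ i, hExp (a i).toNat) 1 := by
  rw [monomial_sum_one]
  exact prod_congr rfl fun i _ => by rw [hZ, if_neg (not_lt.2 (ha i)), hh_eq_monomial]

theorem schur_hasLeadingTerm {l : List ℕ} (hl : IsPartition l) :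
    HasLeadingTerm (expOf l) (schur l) := by
  set a : Equiv.Perm (Fin l.length) → Fin l.length → ℤ := fun σ i => (l.get i : ℤ) - i + σ i
  have hanti : Antitone fun i => l.get i := fun i j hij =>
    hij.eq_or_lt.elim (fun h => h ▸ le_rfl) fun h => List.pairwise_iff_get.1 hl.1 i j h
  have hdet : schur l = ∑ σ, Equiv.Perm.sign σ • ∏ i, hZ (a σ i) := by
    rw [schur, ← Matrix.det_transpose, Matrix.det_apply]
    rfl
  have hid : ∏ i, hZ (a 1 i) = monomial (expOf l) 1 := by
    rw [prod_hZ_eq_monomial fun i => by simp [a], expOf_eq_sum_get]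
    simp [a]
  have hterm : ∀ σ ≠ 1, ∏ i, hZ (a σ i) ∈ restrictSupport ℚ (dominators (expOf l)) := by
    intro σ hσ
    by_cases hneg : ∃ i, a σ i < 0
    · obtain ⟨i, hi⟩ := hneg
      rw [prod_eq_zero (mem_univ i) (by rw [hZ, if_pos hi])]
      exact zero_mem _
    · simp only [not_exists, not_lt] at hneg
      rw [prod_hZ_eq_monomial hneg, monomial_mem_restrictSupport, expOf_eq_sum_get]
      exact .inl (mem_dominators_of_perm hanti (fun i => Int.toNat_of_nonneg (hneg i)) hσ)
  rw [HasLeadingTerm, hdet, ← add_sum_erase _ _ (mem_univ 1), Equiv.Perm.sign_one, one_smul, hid,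
    add_sub_cancel_left]
  refine sum_mem fun σ hσ => ?_
  rw [Units.smul_def]
  exact zsmul_mem (hterm σ (ne_of_mem_erase hσ)) _

lemma flatten_kSplitAux (k fuel : ℕ) (l : List ℕ) : (kSplitAux k fuel l).flatten = l := by
  fun_induction kSplitAux k fuel l <;> simp_all

lemma sublist_of_mem_kSplitAux {k fuel : ℕ} {l b : List ℕ} (hb : b ∈ kSplitAux k fuel l) :
    b.Sublist l := by
  fun_induction kSplitAux k fuel l with
  | case1 => simp at hb
  | case2 => simp_all
  | case3 => simp_all
  | case4 fuel a rest _ ih =>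
    rcases List.mem_cons.1 hb with rfl | hb
    · exact List.take_sublist _ _
    · exact (ih hb).trans (List.drop_sublist _ _)

lemma mainHook_le_of_mem_kSplitAux {k fuel : ℕ} {l b : List ℕ} (hl : KBounded k l)
    (hfuel : l.length ≤ fuel) (hb : b ∈ kSplitAux k fuel l) : mainHook b ≤ k := by
  fun_induction kSplitAux k fuel l with
  | case1 => simp at hb
  | case2 l hne => exact absurd (List.length_eq_zero_iff.1 (Nat.le_zero.1 hfuel)) hne
  | case3 fuel a rest hshort =>
    have ha := hl a List.mem_cons_self
    rw [List.mem_singleton.1 hb, mainHook]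
    simp only [List.headI, List.length_cons] at hshort ⊢
    omega
  | case4 fuel a rest hlong ih =>
    have ha := hl a List.mem_cons_self
    rcases List.mem_cons.1 hb with rfl | hb
    · obtain ⟨m, hm⟩ : ∃ m, k + 1 - a = m + 1 := ⟨k - a, by omega⟩
      simp only [List.length_cons, not_or, not_le] at hlong
      rw [mainHook, hm, List.take_succ_cons, List.headI, List.length_cons, List.length_take]
      omega
    · refine ih (fun x hx => hl x (List.mem_of_mem_drop hx)) ?_ hb
      simp only [List.length_drop, List.length_cons] at hfuel ⊢
      omega

lemma _root_.IsPartition.sublist {l b : List ℕ} (hl : IsPartition l) (hb : b.Sublist l) :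
    IsPartition b :=
  ⟨hl.1.sublist hb, fun x hx => hl.2 x (hb.subset hx)⟩

lemma hasLeadingTerm_prod_schur {bs : List (List ℕ)} (hbs : ∀ b ∈ bs, IsPartition b) :
    HasLeadingTerm (expOf bs.flatten) (bs.map schur).prod := by
  induction bs with
  | nil => simp [HasLeadingTerm, expOf]
  | cons b bs ih =>
    rw [List.flatten_cons, expOf_append, List.map_cons, List.prod_cons]
    exact (schur_hasLeadingTerm (hbs b List.mem_cons_self)).mul
      (ih fun c hc => hbs c (List.mem_cons_of_mem b hc))

theorem Gk_hasLeadingTerm (k : ℕ) {l : List ℕ} (hl : IsPartition l) :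
    HasLeadingTerm (expOf l) (Gk k l) := by
  have := hasLeadingTerm_prod_schur (bs := kSplit k l) fun b hb =>
    hl.sublist (sublist_of_mem_kSplitAux hb)
  rwa [kSplit, flatten_kSplitAux] at this

lemma hh_mem_supported {k a : ℕ} (ha : a ≤ k) : hh a ∈ supported ℚ (Set.Iio k) := by
  cases a with
  | zero => exact one_mem _
  | succ j => exact X_mem_supported.2 (Nat.lt_of_succ_le ha)

lemma hZ_mem_supported {k : ℕ} {m : ℤ} (hm : m ≤ k) : hZ m ∈ supported ℚ (Set.Iio k) := by
  unfold hZ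
  split_ifs
  · exact zero_mem _
  · exact hh_mem_supported (by omega)

lemma le_headI_of_mem {b : List ℕ} (hb : b.Pairwise (· ≥ ·)) {x : ℕ} (hx : x ∈ b) :
    x ≤ b.headI := by
  cases b with
  | nil => simp at hx
  | cons y rest =>
    rcases List.mem_cons.1 hx with rfl | hx
    exacts [le_rfl, List.rel_of_pairwise_cons hb hx]

lemma schur_mem_supported {k : ℕ} {b : List ℕ} (hb : b.Pairwise (· ≥ ·)) (hk : mainHook b ≤ k) :
    schur b ∈ supported ℚ (Set.Iio k) := by
  rw [schur, Matrix.det_apply]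
  refine Subalgebra.sum_mem _ fun σ _ => ?_
  rw [Units.smul_def]
  refine zsmul_mem (Subalgebra.prod_mem _ fun i _ => hZ_mem_supported ?_) _
  have := le_headI_of_mem hb (List.get_mem b (σ i))
  have := i.isLt
  simp only [mainHook] at hk ⊢
  omega

lemma Gk_mem_supported {k : ℕ} {l : List ℕ} (hl : IsPartition l) (hk : KBounded k l) :
    Gk k l ∈ supported ℚ (Set.Iio k) :=
  Subalgebra.list_prod_mem _ fun f hf => by
    obtain ⟨b, hb, rfl⟩ := List.mem_map.1 hf
    exact schur_mem_supported (hl.sublist (sublist_of_mem_kSplitAux hb)).1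
      (mainHook_le_of_mem_kSplitAux hk le_rfl hb)

lemma supported_le_restrictSupport {σ R : Type*} [CommSemiring R] (s : Set σ) :
    Subalgebra.toSubmodule (supported R s) ≤ restrictSupport R {d | ↑d.support ⊆ s} :=
  fun _ hp d hd _ hi => mem_supported.1 hp ((mem_vars_iff_mem_support _).2 ⟨d, hd, hi⟩)

lemma LamK_eq_restrictSupport (k : ℕ) :
    LamK k = restrictSupport ℚ {d | ↑d.support ⊆ Set.Iio k} := by
  refine le_antisymm (Submodule.span_le.2 ?_) ?_
  · rintro _ ⟨l, -, hk, rfl⟩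
    exact supported_le_restrictSupport _
      (Subalgebra.list_prod_mem _ fun f hf => by
        obtain ⟨a, ha, rfl⟩ := List.mem_map.1 hf
        exact hh_mem_supported (hk a ha))
  · rw [restrictSupport_eq_span, Submodule.span_le]
    rintro _ ⟨d, hd, rfl⟩
    refine Submodule.subset_span ⟨partOf d, isPartition_partOf d, kBounded_partOf hd, ?_⟩
    rw [hProd_eq_monomial, expOf_partOf]

lemma monomial_mem_span_Gk {k : ℕ} {d : ℕ →₀ ℕ} (hd : ↑d.support ⊆ Set.Iio k) :
    monomial d 1 ∈ Submodule.span ℚ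
      (Set.range fun l : {l : List ℕ // IsPartition l ∧ KBounded k l} => Gk k l.1) := by
  induction d using wellFounded_dominators.induction with
  | _ d ih =>
    have hG := Gk_hasLeadingTerm k (isPartition_partOf d)
    rw [expOf_partOf] at hG
    have hrest : Gk k (partOf d) - monomial d 1 ∈
        restrictSupport ℚ (dominators d ∩ {e | ↑e.support ⊆ Set.Iio k}) :=
      Set.subset_inter hG (sub_mem
        (supported_le_restrictSupport _
          (Gk_mem_supported (isPartition_partOf d) (kBounded_partOf hd)))
        ((monomial_mem_restrictSupport ℚ).2 (.inl hd)))
    rw [restrictSupport_eq_span] at hrest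
    have hspan := Submodule.span_le.2 (Set.image_subset_iff.2 fun e he => ih e he.1 he.2) hrest
    have hGmem : Gk k (partOf d) ∈ Submodule.span ℚ
        (Set.range fun l : {l : List ℕ // IsPartition l ∧ KBounded k l} => Gk k l.1) :=
      Submodule.subset_span ⟨⟨partOf d, isPartition_partOf d, kBounded_partOf hd⟩, rfl⟩
    simpa using sub_mem hGmem hspan

end KSplit

open KSplit

theorem kSplit_polynomials_basis_general (k : ℕ) :
    LinearIndependent ℚ
      (fun l : {l : List ℕ // IsPartition l ∧ KBounded k l} => Gk k l.1) ∧
    Submodule.span ℚ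
      (Set.range fun l : {l : List ℕ // IsPartition l ∧ KBounded k l} => Gk k l.1) =
      LamK k := by
  refine ⟨linearIndependent_of_hasLeadingTerm (d := fun l => expOf l.1)
    (fun l l' h => Subtype.ext (expOf_injOn l.2.1 l'.2.1 h)) fun l => Gk_hasLeadingTerm k l.2.1,
    le_antisymm ?_ ?_⟩
  · rw [Submodule.span_le, LamK_eq_restrictSupport]
    rintro _ ⟨l, rfl⟩
    exact supported_le_restrictSupport _ (Gk_mem_supported l.2.1 l.2.2)
  · rw [LamK_eq_restrictSupport, MvPolynomial.restrictSupport_eq_span, Submodule.span_le]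
    rintro _ ⟨d, hd, rfl⟩
    exact monomial_mem_span_Gk hd

/-- For every integer `k ≥ 1`, the `k`-split polynomials
`{G_λ^{(k)}}`, indexed by the `k`-bounded partitions `λ`, form a basis of the
vector space `Λ^{(k)}`: they are linearly independent and span `Λ^{(k)}`. -/
theorem kSplit_polynomials_basis (k : ℕ) (hk : 1 ≤ k) :
    LinearIndependent ℚ
      (fun l : {l : List ℕ // IsPartition l ∧ KBounded k l} => Gk k l.1) ∧
    Submodule.span ℚ
      (Set.range fun l : {l : List ℕ // IsPartition l ∧ KBounded k l} => Gk k l.1) =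
      LamK k :=
  kSplit_polynomials_basis_general k
end
end

section
/- For any k-bounded partition λ, the k-Schur function expands unitriangularly in the homogeneous basis with integer coefficients and k-bounded indices: s_λ^{(k)} = h_λ + Σ_{μ > λ, μ_1 ≤ k} d_{λμ}^{(k)} h_μ, where the sum is over k-bounded partitions μ of |λ| with μ > λ in dominance order and each d_{λμ}^{(k)} is an integer. -/
open scoped BigOperators Classical

noncomputable section

/-- The `k`-Schur functions (at `t = 1`), defined recursively from a family `T`
of projection operators by `s_λ^{(k)} = T_{λ₁} (s_{λ₁} ⋅ s_{(λ₂,λ₃,…)}^{(k)})`,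
starting from `s_{()}^{(k)} = 1`. -/
def kSchurWith (T : ℕ → (SymFn →ₗ[ℚ] SymFn)) : List ℕ → SymFn
  | [] => 1
  | a :: rest => T a (schur [a] * kSchurWith T rest)

/-- `T` is a family of projection operators for `Λ^{(k)}`:
`T_j G_λ^{(k)} = G_λ^{(k)}` if `λ₁ = j` and `0` otherwise, for every
`k`-bounded partition `λ`.  (Any such family restricts to the projection
operator of Lapointe–Morse on `Λ^{(k)}`.) -/
def ProjOps (k : ℕ) (T : ℕ → (SymFn →ₗ[ℚ] SymFn)) : Prop :=
  ∀ (j : ℕ) (l : List ℕ), IsPartition l → KBounded k l →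
    T j (Gk k l) = if l.headI = j then Gk k l else 0

/-!
Call `x` unitriangular at `λ` if `x - h_λ` is an integer combination of monomials `h_m`, where
`m` is a multiset of `k`-bounded parts of the same size as `λ` that dominates `λ` and has a
strictly larger sum of squares of parts; unlike `m ≠ λ`, this strictness is preserved under
concatenation, so unitriangularity is stable under products.

In the Jacobi–Trudi expansion of `s_B` with `h_M(B) ≤ k`, the term of a permutation `σ ≠ 1`
is `h` of the parts `B_i - i + σ(i)`. These dominate `B` because the first `t` values of `σ`
sum to at least `0 + 1 + ⋯ + (t - 1)`, and have a larger sum of squares by the rearrangement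
inequality, since `B_i - i` is strictly decreasing. Hence every `G_λ^{(k)}` is
unitriangular, and by well-founded induction the `G_μ` and the `h_μ`, for `μ` strictly above
`λ`, span the same `ℤ`-module; the projections `T_j` preserve it. By induction on `ℓ(λ)`,
`h_{λ₁} s^{(k)}_{λ̄}` is unitriangular, so it differs from `G_λ` by an element of that
module, and applying `T_{λ₁}` shows that `s^{(k)}_λ - G_λ` lies in it as well.
-/

section Unitriangular

open Submodule

variable {ι R M : Type*} [Ring R] [AddCommGroup M] [Module R M] {r : ι → Set ι}
  {f g : ι → M}

theorem span_image_le_of_sub_mem (hr : ∀ i, ∀ j ∈ r i, r j ⊆ r i) {i : ι}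
    (h : ∀ j ∈ r i, f j - g j ∈ span R (g '' r j)) :
    span R (f '' r i) ≤ span R (g '' r i) := by
  rw [span_le]
  rintro _ ⟨j, hj, rfl⟩
  rw [SetLike.mem_coe, ← add_sub_cancel (g j) (f j)]
  exact add_mem (subset_span ⟨j, hj, rfl⟩) (span_mono (Set.image_mono (hr i j hj)) (h j hj))

theorem sub_mem_span_image_of_wellFounded (hr : ∀ i, ∀ j ∈ r i, r j ⊆ r i)
    (hwf : WellFounded fun j i => j ∈ r i) {P : ι → Prop} (hP : ∀ i, ∀ j ∈ r i, P j)
    (h : ∀ i, P i → g i - f i ∈ span R (f '' r i)) (i : ι) (hi : P i) :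
    f i - g i ∈ span R (g '' r i) := by
  induction i using hwf.induction with
  | _ i ih =>
    rw [← neg_sub]
    exact neg_mem (span_image_le_of_sub_mem hr (fun j hj => ih j hj (hP i j hj)) (h i hi))

theorem span_image_eq_of_sub_mem (hr : ∀ i, ∀ j ∈ r i, r j ⊆ r i)
    (hwf : WellFounded fun j i => j ∈ r i) {P : ι → Prop} (hP : ∀ i, ∀ j ∈ r i, P j)
    (h : ∀ i, P i → g i - f i ∈ span R (f '' r i)) (i : ι) :
    span R (g '' r i) = span R (f '' r i) :=
  le_antisymm (span_image_le_of_sub_mem hr fun j hj => h j (hP i j hj))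
    (span_image_le_of_sub_mem hr fun j hj =>
      sub_mem_span_image_of_wellFounded hr hwf hP h j (hP i j hj))

end Unitriangular

namespace KSchur

open Finset Submodule

@[to_additive]
lemma prod_map_filter_pos {M : Type*} [CommMonoid M] {f : ℕ → M} (hf : f 0 = 1)
    (m : Multiset ℕ) : ((m.filter (0 < ·)).map f).prod = (m.map f).prod := by
  induction m using Multiset.induction_on with
  | empty => rfl
  | cons a m ih => by_cases ha : 0 < a <;> simp_all

def hProdM (m : Multiset ℕ) : SymFn := (m.map hh).prod

@[simp]
lemma hProdM_coe (l : List ℕ) : hProdM l = hProd l := by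
  simp [hProdM, hProd]

lemma hProdM_add (m₁ m₂ : Multiset ℕ) : hProdM (m₁ + m₂) = hProdM m₁ * hProdM m₂ := by
  simp [hProdM]

def sqSum (m : Multiset ℕ) : ℕ := (m.map (· ^ 2)).sum

lemma sqSum_add (m₁ m₂ : Multiset ℕ) : sqSum (m₁ + m₂) = sqSum m₁ + sqSum m₂ := by
  simp [sqSum]

lemma sqSum_le_sum_sq (m : Multiset ℕ) : sqSum m ≤ m.sum ^ 2 := by
  induction m using Multiset.induction_on with
  | empty => rfl
  | cons a m ih =>
    simp only [sqSum, Multiset.map_cons, Multiset.sum_cons] at ih ⊢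
    nlinarith [Nat.zero_le (a * m.sum)]

/-- Dominance without sorting: the largest sum of at most `t` elements of `m` is the `t`-th prefix
sum of `m` sorted decreasingly. -/
def MDominates (m : Multiset ℕ) (l : List ℕ) : Prop :=
  ∀ t, ∃ s ≤ m, Multiset.card s ≤ t ∧ (l.take t).sum ≤ s.sum

lemma mdominates_coe_of_dominates {μ l : List ℕ} (h : Dominates μ l) : MDominates μ l :=
  fun t => ⟨μ.take t, Multiset.coe_le.2 (List.take_sublist t μ).subperm, by simp, h t⟩

lemma MDominates.add {m₁ m₂ : Multiset ℕ} {l₁ l₂ : List ℕ} (h₁ : MDominates m₁ l₁)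
    (h₂ : MDominates m₂ l₂) : MDominates (m₁ + m₂) (l₁ ++ l₂) := by
  intro t
  obtain ⟨s₁, hs₁, hc₁, hsum₁⟩ := h₁ (min t l₁.length)
  obtain ⟨s₂, hs₂, hc₂, hsum₂⟩ := h₂ (t - l₁.length)
  refine ⟨s₁ + s₂, add_le_add hs₁ hs₂, by simp only [Multiset.card_add]; omega, ?_⟩
  rw [List.take_append, List.sum_append, Multiset.sum_add]
  rw [show l₁.take (min t l₁.length) = l₁.take t by simp] at hsum₁
  omega

lemma sum_le_sum_take {L : List ℕ} (hL : L.Pairwise (· ≥ ·)) {s : Multiset ℕ} {t : ℕ}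
    (hs : s ≤ L) (ht : Multiset.card s ≤ t) : s.sum ≤ (L.take t).sum := by
  induction L generalizing s t with
  | nil => simp [Multiset.le_zero.1 (by simpa using hs)]
  | cons a L ih =>
    obtain ⟨ha, hL⟩ := List.pairwise_cons.1 hL
    obtain _ | t := t
    · simp [Multiset.card_eq_zero.1 (Nat.le_zero.1 ht)]
    -- remove from `s` either `a` itself or some entry `x ≤ a` of `L`
    obtain ⟨s', hs'L, hs't, hsum⟩ :
        ∃ s' ≤ (L : Multiset ℕ), Multiset.card s' ≤ t ∧ s.sum ≤ a + s'.sum := by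
      by_cases has : a ∈ s
      · refine ⟨s.erase a, ?_, ?_, (Multiset.sum_erase has).ge⟩
        · simpa using Multiset.erase_le_erase a hs
        · rw [Multiset.card_erase_of_mem has, Nat.pred_eq_sub_one]; omega
      have hsL : s ≤ L := (Multiset.le_cons_of_notMem has).1 hs
      rcases Multiset.empty_or_exists_mem s with rfl | ⟨x, hx⟩
      · exact ⟨0, Multiset.zero_le _, by simp, by simp⟩
      refine ⟨s.erase x, (Multiset.erase_le x s).trans hsL, ?_, ?_⟩
      · rw [Multiset.card_erase_of_mem hx, Nat.pred_eq_sub_one]; omega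
      · rw [← Multiset.sum_erase hx]
        exact Nat.add_le_add_right (ha x (by simpa using Multiset.mem_of_le hsL hx)) _
    simpa using hsum.trans (Nat.add_le_add_left (ih hL hs'L hs't) a)

def sortPos (m : Multiset ℕ) : List ℕ := (m.filter (0 < ·)).sort (· ≥ ·)

@[simp]
lemma coe_sortPos (m : Multiset ℕ) : (sortPos m : Multiset ℕ) = m.filter (0 < ·) :=
  Multiset.sort_eq _ _

lemma isPartition_sortPos (m : Multiset ℕ) : IsPartition (sortPos m) :=
  ⟨Multiset.pairwise_sort _ _, fun x hx => (Multiset.mem_filter.1 (by simpa using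
    (Multiset.mem_coe.2 hx : x ∈ (sortPos m : Multiset ℕ)))).2⟩

lemma dominates_sortPos {m : Multiset ℕ} {l : List ℕ} (h : MDominates m l) :
    Dominates (sortPos m) l := by
  intro t
  obtain ⟨s, hsm, hst, hsum⟩ := h t
  calc (l.take t).sum ≤ s.sum := hsum
    _ = (s.filter (0 < ·)).sum := by simpa using (sum_map_filter_pos (f := id) rfl s).symm
    _ ≤ ((sortPos m).take t).sum :=
        sum_le_sum_take (Multiset.pairwise_sort _ _)
          (by simpa using Multiset.filter_le_filter _ hsm)
          ((Multiset.card_le_card (Multiset.filter_le _ s)).trans hst)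

def upperTerms (k : ℕ) (l : List ℕ) : Set (Multiset ℕ) :=
  {m | (∀ x ∈ m, x ≤ k) ∧ m.sum = l.sum ∧ MDominates m l ∧ sqSum l ≤ sqSum m}

def strictUpperTerms (k : ℕ) (l : List ℕ) : Set (Multiset ℕ) :=
  {m | m ∈ upperTerms k l ∧ sqSum l < sqSum m}

def upperSpan (k : ℕ) (l : List ℕ) : Submodule ℤ SymFn :=
  span ℤ (hProdM '' strictUpperTerms k l)

lemma coe_mem_upperTerms {k : ℕ} {l : List ℕ} (hl : KBounded k l) :
    (l : Multiset ℕ) ∈ upperTerms k l :=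
  ⟨fun x hx => hl x (Multiset.mem_coe.1 hx), by simp,
    mdominates_coe_of_dominates fun _ => le_rfl, le_rfl⟩

lemma add_mem_strictUpperTerms {k : ℕ} {l₁ l₂ : List ℕ} {m₁ m₂ : Multiset ℕ}
    (h₁ : m₁ ∈ upperTerms k l₁) (h₂ : m₂ ∈ upperTerms k l₂)
    (h : m₁ ∈ strictUpperTerms k l₁ ∨ m₂ ∈ strictUpperTerms k l₂) :
    m₁ + m₂ ∈ strictUpperTerms k (l₁ ++ l₂) := by
  obtain ⟨hb₁, hs₁, hd₁, hq₁⟩ := h₁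
  obtain ⟨hb₂, hs₂, hd₂, hq₂⟩ := h₂
  have hsq : sqSum ↑(l₁ ++ l₂) = sqSum l₁ + sqSum l₂ := by
    rw [← Multiset.coe_add, sqSum_add]
  refine ⟨⟨fun x hx => (Multiset.mem_add.1 hx).elim (hb₁ x) (hb₂ x), by simp [hs₁, hs₂],
    hd₁.add hd₂, ?_⟩, ?_⟩ <;> rw [sqSum_add, hsq]
  · omega
  · rcases h with h | h <;> have := h.2 <;> omega

lemma mul_mem_span_image_hProdM {S₁ S₂ S : Set (Multiset ℕ)}
    (hS : ∀ m₁ ∈ S₁, ∀ m₂ ∈ S₂, m₁ + m₂ ∈ S) {x y : SymFn}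
    (hx : x ∈ span ℤ (hProdM '' S₁)) (hy : y ∈ span ℤ (hProdM '' S₂)) :
    x * y ∈ span ℤ (hProdM '' S) := by
  have hxy := Submodule.mul_mem_mul hx hy
  rw [span_mul_span] at hxy
  refine span_mono ?_ hxy
  rintro _ ⟨_, ⟨m₁, h₁, rfl⟩, _, ⟨m₂, h₂, rfl⟩, rfl⟩
  exact ⟨m₁ + m₂, hS m₁ h₁ m₂ h₂, hProdM_add m₁ m₂⟩

lemma hProd_mem_span (l : List ℕ) : hProd l ∈ span ℤ (hProdM '' {(l : Multiset ℕ)}) :=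
  subset_span ⟨l, rfl, hProdM_coe l⟩

lemma mul_sub_hProd_mem_upperSpan {k : ℕ} {l₁ l₂ : List ℕ} (hl₁ : KBounded k l₁)
    (hl₂ : KBounded k l₂) {x y : SymFn} (hx : x - hProd l₁ ∈ upperSpan k l₁)
    (hy : y - hProd l₂ ∈ upperSpan k l₂) :
    x * y - hProd (l₁ ++ l₂) ∈ upperSpan k (l₁ ++ l₂) := by
  have e : x * y - hProd (l₁ ++ l₂) = hProd l₁ * (y - hProd l₂) + (x - hProd l₁) * hProd l₂
      + (x - hProd l₁) * (y - hProd l₂) := by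
    rw [show hProd (l₁ ++ l₂) = hProd l₁ * hProd l₂ by simp [hProd]]
    ring
  have hl₁' := coe_mem_upperTerms hl₁
  have hl₂' := coe_mem_upperTerms hl₂
  rw [e]
  refine add_mem (add_mem ?_ ?_) ?_
  · refine mul_mem_span_image_hProdM ?_ (hProd_mem_span l₁) hy
    rintro _ rfl m₂ h₂
    exact add_mem_strictUpperTerms hl₁' h₂.1 (.inr h₂)
  · refine mul_mem_span_image_hProdM ?_ hx (hProd_mem_span l₂)
    rintro m₁ h₁ _ rfl
    exact add_mem_strictUpperTerms h₁.1 hl₂' (.inl h₁)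
  · refine mul_mem_span_image_hProdM ?_ hx hy
    intro m₁ h₁ m₂ h₂
    exact add_mem_strictUpperTerms h₁.1 h₂.1 (.inl h₁)

section Rearrangement

variable {n : ℕ}

lemma monotone_fin_val_int : Monotone fun i : Fin n => ((i : ℕ) : ℤ) :=
  fun _ _ h => Int.ofNat_le.2 h

lemma sum_mul_val_le_sum_mul_perm {w : Fin n → ℤ} (hw : Antitone w) (σ : Equiv.Perm (Fin n)) :
    ∑ i, w i * (i : ℤ) ≤ ∑ i, w i * (σ i : ℤ) :=
  (hw.antivary monotone_fin_val_int).sum_mul_le_sum_mul_comp_perm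

lemma sum_mul_val_lt_sum_mul_perm {w : Fin n → ℤ} (hw : StrictAnti w) {σ : Equiv.Perm (Fin n)}
    (hσ : σ ≠ 1) : ∑ i, w i * (i : ℤ) < ∑ i, w i * (σ i : ℤ) := by
  refine (hw.antitone.antivary monotone_fin_val_int).sum_mul_lt_sum_mul_comp_perm_iff.2
    fun h => hσ ?_
  have hσmono : StrictMono σ := fun i j hij => by
    by_contra hji
    have hlt : ((σ j : ℕ) : ℤ) < (σ i : ℕ) := by
      have := Fin.val_injective.ne (σ.injective.ne hij.ne')
      omega
    exact (hw hij).not_ge (h hlt)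
  exact Equiv.ext fun i => hσmono.apply_eq

end Rearrangement

section JacobiTrudi

variable {n : ℕ} (b : Fin n → ℕ) (σ : Equiv.Perm (Fin n))

/-- The index `λᵢ - i + σ(i)` of the `i`-th factor in the term of `σ` in the Jacobi–Trudi
determinant of `λ = b`. -/
def jtIndex (i : Fin n) : ℤ := b i - i + σ i

def jtTerm : Multiset ℕ := univ.val.map fun i => (jtIndex b σ i).toNat

variable {b σ}

lemma cast_sum_jtTerm (he : ∀ i, 0 ≤ jtIndex b σ i) (s : Finset (Fin n)) :
    ((s.val.map fun i => (jtIndex b σ i).toNat).sum : ℤ) = ∑ i ∈ s, jtIndex b σ i := by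
  rw [Finset.sum_map_val]
  push_cast
  exact sum_congr rfl fun i _ => Int.toNat_of_nonneg (he i)

lemma sum_jtTerm (he : ∀ i, 0 ≤ jtIndex b σ i) : (jtTerm b σ).sum = (List.ofFn b).sum := by
  rw [← Nat.cast_inj (R := ℤ), jtTerm, cast_sum_jtTerm he, List.sum_ofFn, Nat.cast_sum]
  simp only [jtIndex, sum_add_distrib, sum_sub_distrib,
    Equiv.sum_comp σ (fun i => ((i : ℕ) : ℤ))]
  ring

lemma mdominates_jtTerm (he : ∀ i, 0 ≤ jtIndex b σ i) :
    MDominates (jtTerm b σ) (List.ofFn b) := by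
  intro t
  refine ⟨(univ.filter fun i : Fin n => (i : ℕ) < t).val.map fun i => (jtIndex b σ i).toNat,
    Multiset.map_le_map (Multiset.filter_le _ _), ?_, ?_⟩
  · rw [Multiset.card_map]
    exact (Fin.card_filter_val_lt (n := n) (m := t)).trans_le (min_le_right _ _)
  · rw [← Nat.cast_le (α := ℤ), cast_sum_jtTerm he, List.sum_take_ofFn, Nat.cast_sum]
    -- the first `t` values of `σ` sum to at least `0 + 1 + ⋯ + (t - 1)`
    have key := sum_mul_val_le_sum_mul_perm
      (w := fun i : Fin n => if (i : ℕ) < t then 1 else 0)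
      (fun i j hij => by dsimp only; split_ifs <;> omega) σ
    simp only [ite_mul, one_mul, zero_mul, ← sum_filter] at key
    simp only [jtIndex, sum_add_distrib, sum_sub_distrib]
    linarith

lemma sqSum_lt_sqSum_jtTerm (hb : Antitone b) (hσ : σ ≠ 1) (he : ∀ i, 0 ≤ jtIndex b σ i) :
    sqSum (List.ofFn b) < sqSum (jtTerm b σ) := by
  rw [← Nat.cast_lt (α := ℤ)]
  have hB : (sqSum (List.ofFn b) : ℤ) = ∑ i, (b i : ℤ) ^ 2 := by
    simp [sqSum, List.sum_ofFn]
  have hE : (sqSum (jtTerm b σ) : ℤ) = ∑ i, jtIndex b σ i ^ 2 := by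
    simp only [sqSum, jtTerm, Multiset.map_map, Function.comp_def, Finset.sum_map_val]
    push_cast
    exact sum_congr rfl fun i _ => by rw [Int.toNat_of_nonneg (he i)]
  -- by rearrangement, since `b i - i` is strictly decreasing
  have hlt := sum_mul_val_lt_sum_mul_perm (w := fun i => (b i : ℤ) - i)
    (fun i j hij => show (b j : ℤ) - j < b i - i by
      have := hb hij.le; have : (i : ℕ) < j := hij; omega) hσ
  have hdiff : ∑ i, jtIndex b σ i ^ 2 - ∑ i, (b i : ℤ) ^ 2
      = 2 * (∑ i, ((b i : ℤ) - i) * (σ i : ℤ) - ∑ i, ((b i : ℤ) - i) * (i : ℤ))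
        + (∑ i, ((σ i : ℕ) : ℤ) ^ 2 - ∑ i : Fin n, ((i : ℕ) : ℤ) ^ 2) := by
    rw [← sum_sub_distrib, ← sum_sub_distrib, ← sum_sub_distrib, mul_sum, ← sum_add_distrib]
    exact sum_congr rfl fun i _ => by simp only [jtIndex]; ring
  rw [Equiv.sum_comp σ (fun i => ((i : ℕ) : ℤ) ^ 2)] at hdiff
  rw [hB, hE]
  linarith

lemma jtTerm_mem {k : ℕ} (hb : Antitone b) (hk : ∀ i j : Fin n, b i + j ≤ k) (hσ : σ ≠ 1)
    (he : ∀ i, 0 ≤ jtIndex b σ i) : jtTerm b σ ∈ strictUpperTerms k (List.ofFn b) := by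
  have hsq := sqSum_lt_sqSum_jtTerm hb hσ he
  refine ⟨⟨fun x hx => ?_, sum_jtTerm he, mdominates_jtTerm he, hsq.le⟩, hsq⟩
  obtain ⟨i, -, rfl⟩ := Multiset.mem_map.1 hx
  have := hk i (σ i)
  exact Int.toNat_le.2 (by simp only [jtIndex]; omega)

lemma prod_hZ_jtIndex (he : ∀ i, 0 ≤ jtIndex b σ i) :
    ∏ i, hZ (jtIndex b σ i) = hProdM (jtTerm b σ) := by
  rw [hProdM, jtTerm, Multiset.map_map, Finset.prod_map_val]
  exact prod_congr rfl fun i _ => by simp [hZ, (he i).not_gt]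

lemma sum_perm_jacobiTrudi_sub_hProd_mem {k : ℕ} (hb : Antitone b)
    (hk : ∀ i j : Fin n, b i + j ≤ k) :
    ∑ σ : Equiv.Perm (Fin n), Equiv.Perm.sign σ • ∏ i, hZ (jtIndex b σ i) - hProd (List.ofFn b)
      ∈ upperSpan k (List.ofFn b) := by
  have hdiag : ∏ i, hZ (jtIndex b 1 i) = hProd (List.ofFn b) := by
    rw [prod_hZ_jtIndex fun i => by simp [jtIndex], jtTerm, ← hProdM_coe, ← Fin.univ_val_map]
    simp [jtIndex]
  rw [← add_sum_erase _ _ (mem_univ 1), Equiv.Perm.sign_one, one_smul, hdiag,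
    add_sub_cancel_left]
  refine sum_mem fun σ hσ => ?_
  rw [Units.smul_def]
  refine Submodule.smul_mem _ _ ?_
  by_cases he : ∀ i, 0 ≤ jtIndex b σ i
  · rw [prod_hZ_jtIndex he]
    exact subset_span ⟨_, jtTerm_mem hb hk (ne_of_mem_erase hσ) he, rfl⟩
  · obtain ⟨i, hi⟩ := not_forall.1 he
    rw [prod_eq_zero (mem_univ i) (show hZ (jtIndex b σ i) = 0 from if_pos (not_le.1 hi))]
    exact zero_mem _

end JacobiTrudi

lemma schur_eq_sum_perm (l : List ℕ) :
    schur l = ∑ σ : Equiv.Perm (Fin l.length),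
      Equiv.Perm.sign σ • ∏ i, hZ (jtIndex l.get σ i) := by
  rw [schur, ← Matrix.det_transpose, Matrix.det_apply]
  rfl

lemma schur_sub_hProd_mem {k : ℕ} {l : List ℕ} (hl : IsPartition l) (hk : mainHook l ≤ k) :
    schur l - hProd l ∈ upperSpan k l := by
  have hanti : Antitone l.get := List.sortedGE_iff_pairwise.2 hl.1
  have hbound : ∀ i j : Fin l.length, l.get i + j ≤ k := by
    intro i j
    obtain _ | ⟨a, l'⟩ := l
    · exact i.elim0
    have hi : (a :: l').get i ≤ a := hanti (Fin.zero_le i)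
    have hj := j.2
    simp only [mainHook, List.headI_cons, List.length_cons] at hk hj
    omega
  simpa [schur_eq_sum_perm] using sum_perm_jacobiTrudi_sub_hProd_mem hanti hbound

lemma IsPartition.of_sublist {l l' : List ℕ} (hl : IsPartition l) (h : l'.Sublist l) :
    IsPartition l' :=
  ⟨hl.1.sublist h, fun x hx => hl.2 x (h.subset hx)⟩

lemma kBounded_of_mainHook_le {k : ℕ} {l : List ℕ} (hl : IsPartition l)
    (hk : mainHook l ≤ k) : KBounded k l := by
  obtain _ | ⟨a, l'⟩ := l
  · simp [KBounded]
  intro x hx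
  have : x ≤ a := (List.mem_cons.1 hx).elim (·.le) ((List.pairwise_cons.1 hl.1).1 x)
  simp only [mainHook, List.headI_cons, List.length_cons] at hk
  omega

lemma kSplitAux_spec {k : ℕ} (fuel : ℕ) {l : List ℕ} (hfuel : l.length ≤ fuel)
    (hl : IsPartition l) (hb : KBounded k l) :
    (kSplitAux k fuel l).flatten = l ∧
      ∀ B ∈ kSplitAux k fuel l, IsPartition B ∧ mainHook B ≤ k := by
  induction fuel generalizing l with
  | zero => simp [List.eq_nil_of_length_eq_zero (Nat.le_zero.1 hfuel), kSplitAux]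
  | succ fuel ih =>
    obtain _ | ⟨a, l'⟩ := l
    · simp [kSplitAux]
    have ha : 0 < a := hl.2 a (by simp)
    have hak : a ≤ k := hb a (by simp)
    rw [kSplitAux]
    split_ifs with hshort
    · refine ⟨by simp, fun B hB => ?_⟩
      obtain rfl := List.mem_singleton.1 hB
      simp only [List.length_cons] at hshort
      refine ⟨hl, ?_⟩
      simp only [mainHook, List.headI_cons, List.length_cons]
      omega
    · obtain ⟨hlong, -⟩ := not_or.1 hshort
      obtain ⟨hflat, hblocks⟩ := ih (l := (a :: l').drop (k + 1 - a))
        (by simp only [List.length_drop, List.length_cons] at hfuel ⊢; omega)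
        (IsPartition.of_sublist hl (List.drop_sublist _ _))
        fun x hx => hb x (List.mem_of_mem_drop hx)
      refine ⟨by simp [hflat], fun B hB => ?_⟩
      obtain rfl | hB := List.mem_cons.1 hB
      · refine ⟨IsPartition.of_sublist hl (List.take_sublist _ _), ?_⟩
        obtain ⟨c, hc⟩ : ∃ c, k + 1 - a = c + 1 := ⟨k - a, by omega⟩
        simp only [mainHook, hc, List.take_succ_cons, List.headI_cons, List.length_cons,
          List.length_take] at hlong ⊢
        omega
      · exact hblocks B hB

lemma prod_schur_sub_hProd_mem {k : ℕ} (bs : List (List ℕ))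
    (hbs : ∀ B ∈ bs, IsPartition B ∧ mainHook B ≤ k) :
    (bs.map schur).prod - hProd bs.flatten ∈ upperSpan k bs.flatten := by
  induction bs with
  | nil => simp [hProd]
  | cons B bs ih =>
    have hbs' : ∀ B ∈ bs, IsPartition B ∧ mainHook B ≤ k :=
      fun B' h => hbs B' (by simp [h])
    obtain ⟨hB, hBk⟩ := hbs B (by simp)
    have hflat : KBounded k bs.flatten := fun x hx => by
      obtain ⟨B', hB', hx⟩ := List.mem_flatten.1 hx
      exact kBounded_of_mainHook_le (hbs' B' hB').1 (hbs' B' hB').2 x hx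
    simpa using mul_sub_hProd_mem_upperSpan (kBounded_of_mainHook_le hB hBk) hflat
      (schur_sub_hProd_mem hB hBk) (ih hbs')

lemma Gk_sub_hProd_mem {k : ℕ} {l : List ℕ} (hl : IsPartition l) (hb : KBounded k l) :
    Gk k l - hProd l ∈ upperSpan k l := by
  obtain ⟨hflat, hblocks⟩ := kSplitAux_spec l.length le_rfl hl hb
  have := prod_schur_sub_hProd_mem (kSplit k l) hblocks
  rwa [kSplit, hflat] at this

def upperPartitions (k : ℕ) (l : List ℕ) : Set (List ℕ) :=
  {μ | IsPartition μ ∧ KBounded k μ ∧ μ.sum = l.sum ∧ Dominates μ l ∧ sqSum l < sqSum μ}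

lemma sortPos_mem_upperPartitions {k : ℕ} {l : List ℕ} {m : Multiset ℕ}
    (hm : m ∈ strictUpperTerms k l) : sortPos m ∈ upperPartitions k l := by
  obtain ⟨⟨hb, hs, hd, -⟩, hq⟩ := hm
  have hmem : ∀ x ∈ sortPos m, x ∈ m := fun x hx =>
    Multiset.mem_of_mem_filter
      (by simpa using (Multiset.mem_coe.2 hx : x ∈ (sortPos m : Multiset ℕ)))
  refine ⟨isPartition_sortPos m, fun x hx => hb x (hmem x hx), ?_, dominates_sortPos hd, ?_⟩
  · rw [← Multiset.sum_coe, coe_sortPos, ← hs]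
    simpa using sum_map_filter_pos (f := id) rfl m
  · have hsq : sqSum (sortPos m) = sqSum m := by
      rw [coe_sortPos]
      exact sum_map_filter_pos (f := (· ^ 2)) (by norm_num) m
    rwa [hsq]

lemma hProd_sortPos (m : Multiset ℕ) : hProd (sortPos m) = hProdM m := by
  rw [← hProdM_coe, coe_sortPos]
  exact prod_map_filter_pos rfl m

lemma coe_mem_strictUpperTerms {k : ℕ} {l μ : List ℕ} (hμ : μ ∈ upperPartitions k l) :
    (μ : Multiset ℕ) ∈ strictUpperTerms k l :=
  ⟨⟨hμ.2.1, by simpa using hμ.2.2.1, mdominates_coe_of_dominates hμ.2.2.2.1, hμ.2.2.2.2.le⟩,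
    hμ.2.2.2.2⟩

lemma upperSpan_eq (k : ℕ) (l : List ℕ) :
    upperSpan k l = span ℤ (hProd '' upperPartitions k l) := by
  refine le_antisymm (span_le.2 ?_) (span_le.2 ?_)
  · rintro _ ⟨m, hm, rfl⟩
    exact subset_span ⟨sortPos m, sortPos_mem_upperPartitions hm, hProd_sortPos m⟩
  · rintro _ ⟨μ, hμ, rfl⟩
    exact subset_span ⟨μ, coe_mem_strictUpperTerms hμ, hProdM_coe μ⟩

lemma upperPartitions_subset {k : ℕ} {l μ : List ℕ} (hμ : μ ∈ upperPartitions k l) :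
    upperPartitions k μ ⊆ upperPartitions k l :=
  fun _ ⟨hp, hb, hs, hd, hq⟩ =>
    ⟨hp, hb, hs.trans hμ.2.2.1, fun t => (hμ.2.2.2.1 t).trans (hd t), hμ.2.2.2.2.trans hq⟩

lemma wellFounded_upperPartitions (k : ℕ) :
    WellFounded fun μ l => μ ∈ upperPartitions k l := by
  refine Subrelation.wf (r := InvImage (· < ·) fun l : List ℕ => l.sum ^ 2 - sqSum l)
    (fun {μ l} hμ => ?_) (InvImage.wf _ wellFounded_lt)
  have hsq := sqSum_le_sum_sq μ
  rw [Multiset.sum_coe, hμ.2.2.1] at hsq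
  show μ.sum ^ 2 - sqSum μ < l.sum ^ 2 - sqSum l
  rw [hμ.2.2.1]
  have := hμ.2.2.2.2
  omega

lemma span_Gk_eq {k : ℕ} (l : List ℕ) :
    span ℤ (Gk k '' upperPartitions k l) = span ℤ (hProd '' upperPartitions k l) :=
  span_image_eq_of_sub_mem (fun _ _ => upperPartitions_subset) (wellFounded_upperPartitions k)
    (P := fun l => IsPartition l ∧ KBounded k l) (fun _ _ hμ => ⟨hμ.1, hμ.2.1⟩)
    (fun l hl => upperSpan_eq k l ▸ Gk_sub_hProd_mem hl.1 hl.2) l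

lemma apply_mem_span_Gk {k : ℕ} {T : ℕ → SymFn →ₗ[ℚ] SymFn} (hT : ProjOps k T) (j : ℕ)
    {l : List ℕ} {x : SymFn} (hx : x ∈ span ℤ (Gk k '' upperPartitions k l)) :
    T j x ∈ span ℤ (Gk k '' upperPartitions k l) := by
  have hle : span ℤ (Gk k '' upperPartitions k l)
      ≤ (span ℤ (Gk k '' upperPartitions k l)).comap ((T j).restrictScalars ℤ) := by
    rw [span_le]
    rintro _ ⟨μ, hμ, rfl⟩
    change T j (Gk k μ) ∈ span ℤ (Gk k '' upperPartitions k l)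
    rw [hT j μ hμ.1 hμ.2.1]
    split_ifs
    exacts [subset_span ⟨μ, hμ, rfl⟩, zero_mem _]
  exact hle hx

lemma schur_singleton (a : ℕ) : schur [a] = hh a := by
  simp [schur, Matrix.det_unique, hZ]

theorem kSchurWith_sub_hProd_mem {k : ℕ} {T : ℕ → SymFn →ₗ[ℚ] SymFn} (hT : ProjOps k T)
    {l : List ℕ} (hl : IsPartition l) (hb : KBounded k l) :
    kSchurWith T l - hProd l ∈ upperSpan k l := by
  induction l with
  | nil => simp [kSchurWith, hProd]
  | cons a l ih =>
    have hmul : hh a * kSchurWith T l - hProd ([a] ++ l) ∈ upperSpan k ([a] ++ l) :=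
      mul_sub_hProd_mem_upperSpan (fun x hx => hb x (by simp_all))
        (fun x hx => hb x (by simp [hx])) (by simp [hProd])
        (ih (IsPartition.of_sublist hl (List.sublist_cons_self a l))
          fun x hx => hb x (by simp [hx]))
    have hG : hh a * kSchurWith T l - Gk k (a :: l)
        ∈ span ℤ (Gk k '' upperPartitions k (a :: l)) := by
      rw [span_Gk_eq, ← upperSpan_eq, ← sub_sub_sub_cancel_right _ _ (hProd (a :: l))]
      exact sub_mem hmul (Gk_sub_hProd_mem hl hb)
    have hT_apply : T a (hh a * kSchurWith T l - Gk k (a :: l))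
        = kSchurWith T (a :: l) - Gk k (a :: l) := by
      rw [map_sub, hT a _ hl hb, List.headI_cons, if_pos rfl, kSchurWith, schur_singleton]
    rw [← sub_add_sub_cancel _ (Gk k (a :: l)), ← hT_apply]
    refine add_mem ?_ (Gk_sub_hProd_mem hl hb)
    rw [upperSpan_eq, ← span_Gk_eq]
    exact apply_mem_span_Gk hT a hG

end KSchur

theorem kSchur_h_unitriangular_general (k : ℕ)
    (T : ℕ → (SymFn →ₗ[ℚ] SymFn)) (hT : ProjOps k T)
    (l : List ℕ) (hl : IsPartition l) (hb : KBounded k l) :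
    ∃ (A : Finset (List ℕ)) (d : List ℕ → ℤ),
      (∀ μ ∈ A, IsPartition μ ∧ KBounded k μ ∧ μ.sum = l.sum ∧ Dominates μ l ∧ μ ≠ l) ∧
      kSchurWith T l = hProd l + ∑ μ ∈ A, (d μ : ℚ) • hProd μ := by
  have hmem := KSchur.kSchurWith_sub_hProd_mem hT hl hb
  rw [KSchur.upperSpan_eq] at hmem
  obtain ⟨c, hc, hsum⟩ := (Finsupp.mem_span_image_iff_linearCombination ℤ).1 hmem
  refine ⟨c.support, c, fun μ hμ => ?_, ?_⟩
  · obtain ⟨hp, hkb, hs, hd, hq⟩ := hc hμ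
    exact ⟨hp, hkb, hs, hd, by rintro rfl; exact lt_irrefl _ hq⟩
  · rw [← sub_eq_iff_eq_add', ← hsum, Finsupp.linearCombination_apply, Finsupp.sum]
    simp [Int.cast_smul_eq_zsmul]

/-- For any `k`-bounded partition `λ`, the `k`-Schur function
expands unitriangularly in the homogeneous basis with integer coefficients and
`k`-bounded indices: `s_λ^{(k)} = h_λ + Σ_{μ > λ, μ₁ ≤ k} d_{λμ}^{(k)} h_μ`. -/
theorem kSchur_h_unitriangular (k : ℕ) (hk : 1 ≤ k)
    (T : ℕ → (SymFn →ₗ[ℚ] SymFn)) (hT : ProjOps k T)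
    (l : List ℕ) (hl : IsPartition l) (hb : KBounded k l) :
    ∃ (A : Finset (List ℕ)) (d : List ℕ → ℤ),
      (∀ μ ∈ A, IsPartition μ ∧ KBounded k μ ∧ μ.sum = l.sum ∧ Dominates μ l ∧ μ ≠ l) ∧
      kSchurWith T l = hProd l + ∑ μ ∈ A, (d μ : ℚ) • hProd μ :=
  kSchur_h_unitriangular_general k T hT l hl hb
end
end
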